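/- The discrete-time primal value equals the Lebesgue measure (volume) of the maximum controlled invariant set: p* = λ(X_I). Moreover the supremum is attained by the restriction of the Lebesgue measure to X_I: there exist finite nonnegative Borel measures μ and μ̂₀ such that the triple (λ|_{X_I}, μ, μ̂₀) is feasible for the discrete-time primal LP. -/

import Mathlib

/-!
Upper bound: for a feasible `(μ₀, μ, μ̂₀)`, testing the Liouville equation against nonnegative
continuous functions shows that the support of `μ₀`, and the image under `f` of the support of
`μ`, lie in the support of the state marginal of `μ`. That support is therefore a controlled
invariant subset of `X`, so it lies in `X_I`, and `μ₀ X ≤ μ₀ X_I ≤ λ X_I` because `μ₀ ≤ λ|_X`.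

Lower bound: a measurable selection of inputs keeping `X_I` invariant gives a feedback `g`, and
the discounted occupation measure `∑ₜ αᵗ (xₜ, g xₜ)₊ λ|_{X_I}` of the closed loop satisfies the
Liouville equation with `μ₀ = λ|_{X_I}`, completed by `μ̂₀ = λ|_{X \ X_I}`.
-/

open MeasureTheory
open scoped ENNReal

/-- The (topological) support of a Borel measure. -/
def msupport {α : Type*} [TopologicalSpace α] [MeasurableSpace α] (μ : Measure α) : Set α :=
  {x | ∀ s : Set α, IsOpen s → x ∈ s → 0 < μ s}

/-- The maximum controlled invariant set of the discrete-time system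
`x_{t+1} = f (x_t, u_t)` with state constraint set `X` and input constraint set `U`. -/
def mciD {n m : ℕ} (X : Set (EuclideanSpace ℝ (Fin n))) (U : Set (EuclideanSpace ℝ (Fin m)))
    (f : EuclideanSpace ℝ (Fin n) → EuclideanSpace ℝ (Fin m) → EuclideanSpace ℝ (Fin n)) :
    Set (EuclideanSpace ℝ (Fin n)) :=
  {x0 | ∃ (x : ℕ → EuclideanSpace ℝ (Fin n)) (u : ℕ → EuclideanSpace ℝ (Fin m)),
    x 0 = x0 ∧ (∀ t, x (t + 1) = f (x t) (u t)) ∧ (∀ t, x t ∈ X) ∧ (∀ t, u t ∈ U)}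

/-- The discrete-time discounted Liouville equation for the pair `(μ₀, μ)`. -/
def LiouvilleD {n m : ℕ}
    (f : EuclideanSpace ℝ (Fin n) → EuclideanSpace ℝ (Fin m) → EuclideanSpace ℝ (Fin n))
    (α : ℝ) (μ₀ : Measure (EuclideanSpace ℝ (Fin n)))
    (μ : Measure (EuclideanSpace ℝ (Fin n) × EuclideanSpace ℝ (Fin m))) : Prop :=
  ∀ v : EuclideanSpace ℝ (Fin n) → ℝ, Continuous v →
    ∫ p, v p.1 ∂μ = ∫ x, v x ∂μ₀ + α * ∫ p, v (f p.1 p.2) ∂μ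

/-- Feasibility of a triple `(μ₀, μ, μ̂₀)` for the discrete-time primal LP:
all three are finite nonnegative Borel measures, `μ₀` and `μ̂₀` are supported in `X`,
`μ` is supported in `X × U`, `(μ₀, μ)` satisfies the discounted Liouville equation,
and `μ₀ + μ̂₀` equals the restriction of the Lebesgue measure to `X`. -/
def FeasibleD {n m : ℕ} (X : Set (EuclideanSpace ℝ (Fin n)))
    (U : Set (EuclideanSpace ℝ (Fin m)))
    (f : EuclideanSpace ℝ (Fin n) → EuclideanSpace ℝ (Fin m) → EuclideanSpace ℝ (Fin n))
    (α : ℝ) (μ₀ : Measure (EuclideanSpace ℝ (Fin n)))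
    (μ : Measure (EuclideanSpace ℝ (Fin n) × EuclideanSpace ℝ (Fin m)))
    (μh : Measure (EuclideanSpace ℝ (Fin n))) : Prop :=
  IsFiniteMeasure μ₀ ∧ IsFiniteMeasure μ ∧ IsFiniteMeasure μh ∧
  msupport μ₀ ⊆ X ∧ msupport μh ⊆ X ∧ msupport μ ⊆ X ×ˢ U ∧
  LiouvilleD f α μ₀ μ ∧ μ₀ + μh = volume.restrict X

open Metric Filter Set
open scoped Topology

lemma msupport_eq_support {α : Type*} [TopologicalSpace α] [MeasurableSpace α] (μ : Measure α) :
    msupport μ = μ.support := by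
  ext x
  simp only [msupport, Measure.support_eq_forall_isOpen, mem_ofPred_eq]
  exact forall_congr' fun s => ⟨fun h hs hx => h hx hs, fun h hx hs => h hs hx⟩

section Support

variable {X Y : Type*} [TopologicalSpace X] [MeasurableSpace X] [OpensMeasurableSpace X]

lemma image_support_subset_support_map [TopologicalSpace Y] [MeasurableSpace Y] [BorelSpace Y]
    {φ : X → Y} (hφ : Continuous φ) (μ : Measure X) : φ '' μ.support ⊆ (μ.map φ).support := by
  rintro _ ⟨x, hx, rfl⟩
  simp only [Measure.support_eq_forall_isOpen, mem_ofPred_eq] at hx ⊢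
  intro s hxs hs
  rw [Measure.map_apply hφ.measurable hs.measurableSet]
  exact hx _ hxs (hs.preimage hφ)

lemma support_map_subset_image [HereditarilyLindelofSpace X] [TopologicalSpace Y] [T2Space Y]
    [MeasurableSpace Y] [BorelSpace Y] {φ : X → Y} (hφ : Continuous φ) {μ : Measure X}
    (hμ : IsCompact μ.support) : (μ.map φ).support ⊆ φ '' μ.support := by
  have hclosed : IsClosed (φ '' μ.support) := (hμ.image hφ).isClosed
  refine Measure.support_subset_of_isClosed hclosed ?_
  rw [mem_ae_iff, Measure.map_apply hφ.measurable hclosed.measurableSet.compl]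
  exact measure_mono_null (fun x hx hxμ => hx ⟨x, hxμ, rfl⟩) Measure.measure_compl_support

/-- Urysohn's lemma turns a positive-measure neighbourhood into a test function with positive
integral. -/
lemma support_subset_support_of_integral_pos [NormalSpace X] [T1Space X] {μ ν : Measure X}
    [IsFiniteMeasure μ] [IsFiniteMeasure ν]
    (h : ∀ v : X → ℝ, Continuous v → (∀ x, v x ∈ Icc 0 1) →
      0 < ∫ x, v x ∂μ → 0 < ∫ x, v x ∂ν) :
    μ.support ⊆ ν.support := by
  intro x hx
  simp only [Measure.support_eq_forall_isOpen, mem_ofPred_eq] at hx ⊢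
  intro s hxs hs
  obtain ⟨v, hv0, hv1, hv⟩ := exists_continuous_zero_one_of_isClosed hs.isClosed_compl
    isClosed_singleton (disjoint_singleton_right.2 (notMem_compl_iff.2 hxs))
  have hv_nonneg : 0 ≤ (v : X → ℝ) := fun y => (hv y).1
  have hv_int : ∀ ρ : Measure X, [IsFiniteMeasure ρ] → Integrable v ρ := fun ρ _ =>
    Integrable.of_bound v.continuous.aestronglyMeasurable 1 (Eventually.of_forall fun y => by
      rw [Real.norm_of_nonneg (hv y).1]; exact (hv y).2)
  have hsupp_open : IsOpen (Function.support v) := isOpen_compl_singleton.preimage v.continuous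
  have hx_supp : x ∈ Function.support v := by simp [hv1 rfl]
  have hsupp_sub : Function.support v ⊆ s := fun y hy => by
    by_contra hys; exact hy (hv0 hys)
  have hμ : 0 < ∫ y, v y ∂μ :=
    (integral_pos_iff_support_of_nonneg hv_nonneg (hv_int μ)).2 (hx _ hx_supp hsupp_open)
  have hν := (integral_pos_iff_support_of_nonneg hv_nonneg (hv_int ν)).1
    (h v v.continuous hv hμ)
  exact hν.trans_le (measure_mono hsupp_sub)

end Support

section Selection

variable {E F : Type*} [TopologicalSpace E] [MetricSpace F] {K : Set (E × F)}

def IsApproxSelection (K : Set (E × F)) (ε : ℝ) (g : E → F) : Prop :=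
  ∀ x ∈ Prod.fst '' K, ∃ u, (x, u) ∈ K ∧ dist (g x) u ≤ ε

lemma IsApproxSelection.mem_of_tendsto (hK : IsClosed K) {G : ℕ → E → F} {ε : ℕ → ℝ}
    (hε : Tendsto ε atTop (𝓝 0)) (hG : ∀ k, IsApproxSelection K (ε k) (G k)) {x : E}
    (hx : x ∈ Prod.fst '' K) {y : F} (hy : Tendsto (fun k => G k x) atTop (𝓝 y)) :
    (x, y) ∈ K := by
  choose u hu hdist using fun k => hG k x hx
  have hu_tendsto : Tendsto u atTop (𝓝 y) :=
    hy.congr_dist (squeeze_zero (fun _ => dist_nonneg) hdist hε)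
  exact hK.mem_of_tendsto (tendsto_const_nhds.prodMk_nhds hu_tendsto) (Eventually.of_forall hu)

variable [T2Space E] [MeasurableSpace E] [OpensMeasurableSpace E]

lemma measurableSet_exists_mem_closedBall (hK : IsCompact K) (c : F) (ε : ℝ) :
    MeasurableSet {x | ∃ u, (x, u) ∈ K ∧ dist c u ≤ ε} := by
  have hcl : IsClosed {p : E × F | dist c p.2 ≤ ε} :=
    isClosed_le (continuous_const.dist continuous_snd) continuous_const
  convert ((hK.inter_right hcl).image continuous_fst).isClosed.measurableSet using 1
  ext x
  simp only [mem_ofPred_eq, mem_image, mem_inter_iff, Prod.exists, exists_and_right,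
    exists_eq_right]

variable [MeasurableSpace F] [BorelSpace F]

/-- The refined value at `x` is the first point of a dense sequence that is `ε`-close to the fibre
over `x` and `(r + ε)`-close to `g x`. -/
lemma IsApproxSelection.exists_measurable_refine [TopologicalSpace.SeparableSpace F] [Nonempty F]
    (hK : IsCompact K) {g : E → F} (hg : Measurable g) {r : ℝ} (hr : 0 ≤ r)
    (hgK : IsApproxSelection K r g) {ε : ℝ} (hε : 0 < ε) :
    ∃ g' : E → F, Measurable g' ∧ IsApproxSelection K ε g' ∧ ∀ x, dist (g' x) (g x) ≤ r + ε := by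
  classical
  set S := Prod.fst '' K
  have hS : MeasurableSet S := (hK.image continuous_fst).isClosed.measurableSet
  set d := TopologicalSpace.denseSeq F
  set P : ℕ → E → Prop := fun i x =>
    x ∉ S ∨ (∃ u, (x, u) ∈ K ∧ dist (d i) u ≤ ε) ∧ dist (d i) (g x) ≤ r + ε
  have hP : ∀ x, ∃ i, P i x := by
    intro x
    by_cases hx : x ∈ S
    · obtain ⟨u, hu, hgu⟩ := hgK x hx
      obtain ⟨i, hi⟩ := denseRange_iff.1 (TopologicalSpace.denseRange_denseSeq F) u ε hε
      rw [dist_comm] at hi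
      refine ⟨i, Or.inr ⟨⟨u, hu, hi.le⟩, ?_⟩⟩
      calc dist (d i) (g x) ≤ dist (d i) u + dist u (g x) := dist_triangle _ _ _
        _ ≤ r + ε := by rw [dist_comm u]; linarith
    · exact ⟨0, Or.inl hx⟩
  have hPm : ∀ i, MeasurableSet {x | P i x} := fun i =>
    hS.compl.union ((measurableSet_exists_mem_closedBall hK (d i) ε).inter
      (measurableSet_le (measurable_const.dist hg) measurable_const))
  refine ⟨S.piecewise (fun x => d (Nat.find (hP x))) g,
    (Measurable.find (fun _ => measurable_const) hPm hP).piecewise hS hg, ?_, fun x => ?_⟩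
  · intro x hx
    rw [piecewise_eq_of_mem _ _ _ hx]
    obtain ⟨⟨u, hu, hdu⟩, -⟩ := (Nat.find_spec (hP x)).resolve_left (not_not_intro hx)
    exact ⟨u, hu, hdu⟩
  · by_cases hx : x ∈ S
    · rw [piecewise_eq_of_mem _ _ _ hx]
      exact ((Nat.find_spec (hP x)).resolve_left (not_not_intro hx)).2
    · rw [piecewise_eq_of_notMem _ _ _ hx, dist_self]
      positivity

/-- The selection is the limit of successive refinements at scales `2⁻ᵏ`, a uniformly Cauchy
sequence. -/
theorem exists_measurable_selection [CompleteSpace F] [TopologicalSpace.SeparableSpace F]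
    [Nonempty F] (hK : IsCompact K) :
    ∃ g : E → F, Measurable g ∧ ∀ x ∈ Prod.fst '' K, (x, g x) ∈ K := by
  obtain ⟨c⟩ := ‹Nonempty F›
  obtain ⟨R, hR, hKR⟩ := (hK.image continuous_snd).isBounded.subset_closedBall_lt 0 c
  have hc : IsApproxSelection K R fun _ => c := by
    rintro _ ⟨p, hp, rfl⟩
    exact ⟨p.2, hp, by rw [dist_comm]; exact hKR ⟨p, hp, rfl⟩⟩
  obtain ⟨g₀, hg₀, hg₀K, -⟩ := hc.exists_measurable_refine hK measurable_const hR.le one_pos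
  have step : ∀ (k : ℕ) (g : E → F), ∃ g' : E → F,
      Measurable g ∧ IsApproxSelection K ((1 / 2) ^ k) g →
        Measurable g' ∧ IsApproxSelection K ((1 / 2) ^ (k + 1)) g' ∧
          ∀ x, dist (g x) (g' x) ≤ 3 / 2 * (1 / 2) ^ k := by
    intro k g
    by_cases h : Measurable g ∧ IsApproxSelection K ((1 / 2) ^ k) g
    · obtain ⟨g', hg', hg'K, hdist⟩ :=
        h.2.exists_measurable_refine hK h.1 (by positivity) (ε := (1 / 2) ^ (k + 1)) (by positivity)
      refine ⟨g', fun _ => ⟨hg', hg'K, fun x => ?_⟩⟩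
      rw [dist_comm]
      exact (hdist x).trans_eq (by ring)
    · exact ⟨g, fun h' => absurd h' h⟩
  choose next hnext using step
  let G : ℕ → E → F := fun k => Nat.rec g₀ next k
  have hG : ∀ k, Measurable (G k) ∧ IsApproxSelection K ((1 / 2) ^ k) (G k) := by
    intro k
    induction k with
    | zero => exact ⟨hg₀, by rw [pow_zero]; exact hg₀K⟩
    | succ k ih => exact ⟨(hnext k _ ih).1, (hnext k _ ih).2.1⟩
  have hlim : ∀ x, Tendsto (fun k => G k x) atTop (𝓝 (limUnder atTop fun k => G k x)) :=
    fun x => (cauchySeq_of_le_geometric _ _ (by norm_num)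
      fun k => (hnext k _ (hG k)).2.2 x).tendsto_limUnder
  refine ⟨fun x => limUnder atTop fun k => G k x,
    measurable_of_tendsto_metrizable (fun k => (hG k).1) (tendsto_pi_nhds.2 hlim),
    fun x hx => IsApproxSelection.mem_of_tendsto hK.isClosed
      (tendsto_pow_atTop_nhds_zero_of_lt_one (by norm_num) (by norm_num))
      (fun k => (hG k).2) hx (hlim x)⟩

end Selection

section MCI

variable {n m : ℕ} {X : Set (EuclideanSpace ℝ (Fin n))} {U : Set (EuclideanSpace ℝ (Fin m))}
  {f : EuclideanSpace ℝ (Fin n) → EuclideanSpace ℝ (Fin m) → EuclideanSpace ℝ (Fin n)}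

lemma mciD_subset : mciD X U f ⊆ X := by
  rintro _ ⟨x, u, rfl, -, hX, -⟩
  exact hX 0

lemma exists_mem_mciD_of_mem_mciD {x₀ : EuclideanSpace ℝ (Fin n)} (hx₀ : x₀ ∈ mciD X U f) :
    ∃ u ∈ U, f x₀ u ∈ mciD X U f := by
  obtain ⟨x, u, rfl, hstep, hX, hU⟩ := hx₀
  exact ⟨u 0, hU 0, fun t => x (t + 1), fun t => u (t + 1), hstep 0, fun t => hstep (t + 1),
    fun t => hX (t + 1), fun t => hU (t + 1)⟩

lemma subset_mciD {S : Set (EuclideanSpace ℝ (Fin n))} (hSX : S ⊆ X)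
    (hS : ∀ x ∈ S, ∃ u ∈ U, f x u ∈ S) : S ⊆ mciD X U f := by
  choose! κ hκU hκS using hS
  intro x₀ hx₀
  have hmem : ∀ t, (fun y => f y (κ y))^[t] x₀ ∈ S := by
    intro t
    induction t with
    | zero => exact hx₀
    | succ t ih => rw [Function.iterate_succ_apply']; exact hκS _ ih
  exact ⟨fun t => (fun y => f y (κ y))^[t] x₀, fun t => κ ((fun y => f y (κ y))^[t] x₀), rfl,
    fun t => Function.iterate_succ_apply' _ t x₀, fun t => hSX (hmem t), fun t => hκU _ (hmem t)⟩

lemma isCompact_mciD (hX : IsCompact X) (hU : IsCompact U)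
    (hf : Continuous fun p : EuclideanSpace ℝ (Fin n) × EuclideanSpace ℝ (Fin m) => f p.1 p.2) :
    IsCompact (mciD X U f) := by
  set T : Set ((ℕ → EuclideanSpace ℝ (Fin n)) × (ℕ → EuclideanSpace ℝ (Fin m))) :=
    {p | (∀ t, p.1 (t + 1) = f (p.1 t) (p.2 t)) ∧ (∀ t, p.1 t ∈ X) ∧ ∀ t, p.2 t ∈ U}
  have hT_closed : IsClosed T := by
    simp only [T, ofPred_and, ofPred_forall]
    exact (isClosed_iInter fun t => isClosed_eq (by fun_prop)
        (hf.comp (f := fun p : (ℕ → _) × (ℕ → _) => (p.1 t, p.2 t)) (by fun_prop))).inter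
      ((isClosed_iInter fun t => hX.isClosed.preimage (by fun_prop)).inter
        (isClosed_iInter fun t => hU.isClosed.preimage (by fun_prop)))
  have hT : IsCompact T :=
    ((isCompact_univ_pi fun _ => hX).prod (isCompact_univ_pi fun _ => hU)).of_isClosed_subset
      hT_closed fun p hp => ⟨fun t _ => hp.2.1 t, fun t _ => hp.2.2 t⟩
  have hmciD : mciD X U f = (fun p => p.1 0) '' T := by
    ext x₀
    constructor
    · rintro ⟨x, u, h0, hstep, hX, hU⟩
      exact ⟨(x, u), ⟨hstep, hX, hU⟩, h0⟩
    · rintro ⟨p, ⟨hstep, hX, hU⟩, h0⟩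
      exact ⟨p.1, p.2, h0, hstep, hX, hU⟩
  rw [hmciD]
  exact hT.image (by fun_prop)

end MCI

section Occupation

variable {E F : Type*} {f : E → F → E} {g : E → F}

def closedLoop (f : E → F → E) (g : E → F) (t : ℕ) (x : E) : E × F :=
  ((fun y => f y (g y))^[t] x, g ((fun y => f y (g y))^[t] x))

lemma closedLoop_succ_fst (t : ℕ) (x : E) :
    (closedLoop f g (t + 1) x).1 = f (closedLoop f g t x).1 (closedLoop f g t x).2 :=
  Function.iterate_succ_apply' _ _ _

lemma closedLoop_fst_mem {S : Set E} (hS : ∀ x ∈ S, f x (g x) ∈ S) {x : E} (hx : x ∈ S)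
    (t : ℕ) : (closedLoop f g t x).1 ∈ S := by
  induction t with
  | zero => exact hx
  | succ t ih => rw [closedLoop_succ_fst]; exact hS _ ih

variable [MeasurableSpace E] [MeasurableSpace F]

lemma measurable_closedLoop (hf : Measurable fun p : E × F => f p.1 p.2) (hg : Measurable g)
    (t : ℕ) : Measurable (closedLoop f g t) :=
  have hT : Measurable (fun y => f y (g y))^[t] := (hf.comp (measurable_id.prodMk hg)).iterate t
  hT.prodMk (hg.comp hT)

noncomputable def discountedOccupation (f : E → F → E) (g : E → F) (α : ℝ) (ν : Measure E) :
    Measure (E × F) :=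
  Measure.sum fun t => ENNReal.ofReal (α ^ t) • ν.map (closedLoop f g t)

variable {α : ℝ} {ν : Measure E}

lemma isFiniteMeasure_discountedOccupation [IsFiniteMeasure ν]
    (hf : Measurable fun p : E × F => f p.1 p.2) (hg : Measurable g) (hα0 : 0 ≤ α)
    (hα1 : α < 1) : IsFiniteMeasure (discountedOccupation f g α ν) := by
  constructor
  simp_rw [discountedOccupation, Measure.sum_apply _ MeasurableSet.univ, Measure.smul_apply,
    Measure.map_apply (measurable_closedLoop hf hg _) MeasurableSet.univ, preimage_univ,
    smul_eq_mul, ENNReal.ofReal_pow hα0]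
  rw [ENNReal.tsum_mul_right, ENNReal.tsum_geometric]
  exact ENNReal.mul_lt_top (ENNReal.inv_lt_top.2 (tsub_pos_of_lt (ENNReal.ofReal_lt_one.2 hα1)))
    (measure_lt_top ν univ)

lemma ae_discountedOccupation (hf : Measurable fun p : E × F => f p.1 p.2) (hg : Measurable g)
    {P : E × F → Prop} (hP : MeasurableSet {p | P p})
    (h : ∀ t, ∀ᵐ x ∂ν, P (closedLoop f g t x)) : ∀ᵐ p ∂discountedOccupation f g α ν, P p := by
  rw [discountedOccupation, Measure.ae_sum_iff' hP]
  exact fun t => Measure.ae_smul_measure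
    ((ae_map_iff (measurable_closedLoop hf hg t).aemeasurable hP).2 (h t)) _

lemma integral_discountedOccupation (hf : Measurable fun p : E × F => f p.1 p.2)
    (hg : Measurable g) (hα0 : 0 ≤ α) {w : E × F → ℝ} (hw : Measurable w)
    (hwi : Integrable w (discountedOccupation f g α ν)) :
    ∫ p, w p ∂discountedOccupation f g α ν = ∑' t, α ^ t * ∫ x, w (closedLoop f g t x) ∂ν := by
  rw [discountedOccupation, integral_sum_measure hwi]
  congr 1 with t
  rw [integral_smul_measure, integral_map (measurable_closedLoop hf hg t).aemeasurable
    hw.aestronglyMeasurable, ENNReal.toReal_ofReal (pow_nonneg hα0 t), smul_eq_mul]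

/-- Both sides expand into `∑ₜ αᵗ ∫ v(xₜ) dν`, the right one after shifting the index. -/
theorem discountedOccupation_liouville [IsFiniteMeasure ν]
    (hf : Measurable fun p : E × F => f p.1 p.2) (hg : Measurable g) (hα0 : 0 ≤ α)
    (hα1 : α < 1) {S : Set E} (hSm : MeasurableSet S) (hS : ∀ x ∈ S, f x (g x) ∈ S)
    (hν : ∀ᵐ x ∂ν, x ∈ S) {v : E → ℝ} (hv : Measurable v) {M : ℝ}
    (hM : ∀ x ∈ S, ‖v x‖ ≤ M) :
    ∫ p, v p.1 ∂discountedOccupation f g α ν =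
      ∫ x, v x ∂ν + α * ∫ p, v (f p.1 p.2) ∂discountedOccupation f g α ν := by
  set μ := discountedOccupation f g α ν
  have := isFiniteMeasure_discountedOccupation (ν := ν) hf hg hα0 hα1
  have hμS : ∀ᵐ p ∂μ, p.1 ∈ S ∧ f p.1 p.2 ∈ S :=
    ae_discountedOccupation hf hg ((measurable_fst hSm).inter (hf hSm)) fun t =>
      hν.mono fun x hx => ⟨closedLoop_fst_mem hS hx t,
        by rw [← closedLoop_succ_fst (f := f) (g := g)]; exact closedLoop_fst_mem hS hx (t + 1)⟩
  set I : ℕ → ℝ := fun t => ∫ x, v (closedLoop f g t x).1 ∂ν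
  have hI : ∀ t, ‖α ^ t * I t‖ ≤ M * ν.real univ * α ^ t := by
    intro t
    rw [norm_mul, Real.norm_of_nonneg (pow_nonneg hα0 t), mul_comm]
    gcongr
    exact norm_integral_le_of_norm_le_const
      (hν.mono fun x hx => hM _ (closedLoop_fst_mem hS hx t))
  have hsummable : Summable fun t => α ^ t * I t :=
    .of_norm_bounded ((summable_geometric_of_lt_one hα0 hα1).mul_left _) hI
  have hfst : ∫ p, v p.1 ∂μ = ∑' t, α ^ t * I t :=
    integral_discountedOccupation hf hg hα0 (hv.comp measurable_fst)
      (.of_bound (hv.comp measurable_fst).aestronglyMeasurable M (hμS.mono fun p hp => hM _ hp.1))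
  have hnext : ∫ p, v (f p.1 p.2) ∂μ = ∑' t, α ^ t * I (t + 1) := by
    rw [integral_discountedOccupation hf hg hα0 (w := fun p => v (f p.1 p.2)) (hv.comp hf)
      (.of_bound (hv.comp hf).aestronglyMeasurable M (hμS.mono fun p hp => hM _ hp.2))]
    simp only [I, closedLoop_succ_fst]
  rw [hfst, hnext, hsummable.tsum_eq_zero_add, ← tsum_mul_left]
  simp only [pow_zero, one_mul, pow_succ', mul_assoc]
  rfl

end Occupation

section Primal

variable {n m : ℕ} {X : Set (EuclideanSpace ℝ (Fin n))} {U : Set (EuclideanSpace ℝ (Fin m))}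
  {f : EuclideanSpace ℝ (Fin n) → EuclideanSpace ℝ (Fin m) → EuclideanSpace ℝ (Fin n)}
  {α : ℝ}

theorem exists_feasibleD_restrict_mciD (hX : IsCompact X) (hU : IsCompact U)
    (hf : Continuous fun p : EuclideanSpace ℝ (Fin n) × EuclideanSpace ℝ (Fin m) => f p.1 p.2)
    (hα0 : 0 < α) (hα1 : α < 1) :
    ∃ μ μh, FeasibleD X U f α (volume.restrict (mciD X U f)) μ μh := by
  set XI := mciD X U f
  have hXI : IsCompact XI := isCompact_mciD hX hU hf
  have hK : IsCompact (XI ×ˢ U ∩ {p | f p.1 p.2 ∈ XI}) :=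
    (hXI.prod hU).inter_right (hXI.isClosed.preimage hf)
  obtain ⟨g, hg, hgK⟩ := exists_measurable_selection hK
  have hgXI : ∀ x ∈ XI, g x ∈ U ∧ f x (g x) ∈ XI := by
    intro x hx
    obtain ⟨u, hu, hfu⟩ := exists_mem_mciD_of_mem_mciD hx
    have := hgK x ⟨(x, u), ⟨⟨hx, hu⟩, hfu⟩, rfl⟩
    exact ⟨this.1.2, this.2⟩
  have hν : ∀ᵐ x ∂volume.restrict XI, x ∈ XI := ae_restrict_mem hXI.measurableSet
  have : IsFiniteMeasure (volume.restrict XI) :=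
    isFiniteMeasure_restrict.2 hXI.measure_lt_top.ne
  refine ⟨discountedOccupation f g α (volume.restrict XI), volume.restrict (X \ XI),
    inferInstance, isFiniteMeasure_discountedOccupation hf.measurable hg hα0.le hα1,
    isFiniteMeasure_restrict.2 ((measure_mono sdiff_subset).trans_lt hX.measure_lt_top).ne,
    ?_, ?_, ?_, ?_, ?_⟩
  · rw [msupport_eq_support]
    exact Measure.support_restrict_subset.trans
      (inter_subset_left.trans (hXI.isClosed.closure_eq.subset.trans mciD_subset))
  · rw [msupport_eq_support]
    exact Measure.support_restrict_subset.trans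
      (inter_subset_left.trans (hX.isClosed.closure_subset_iff.2 sdiff_subset))
  · rw [msupport_eq_support]
    refine Measure.support_subset_of_isClosed (hX.isClosed.prod hU.isClosed)
      (ae_discountedOccupation hf.measurable hg
        (hX.isClosed.measurableSet.prod hU.isClosed.measurableSet) fun t => hν.mono fun x hx => ?_)
    have hxt := closedLoop_fst_mem (fun y hy => (hgXI y hy).2) hx t
    exact ⟨mciD_subset hxt, (hgXI _ hxt).1⟩
  · intro v hv
    obtain ⟨M, hM⟩ := hXI.exists_bound_of_continuousOn hv.continuousOn
    exact discountedOccupation_liouville hf.measurable hg hα0.le hα1 hXI.measurableSet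
      (fun x hx => (hgXI x hx).2) hν hv.measurable hM
  · rw [← Measure.restrict_union disjoint_sdiff_right
      (hX.isClosed.measurableSet.diff hXI.measurableSet), union_sdiff_cancel mciD_subset]

theorem FeasibleD.measure_le_volume_mciD (hX : IsCompact X) (hU : IsCompact U)
    (hf : Continuous fun p : EuclideanSpace ℝ (Fin n) × EuclideanSpace ℝ (Fin m) => f p.1 p.2)
    (hα0 : 0 < α) {μ₀ μh : Measure (EuclideanSpace ℝ (Fin n))}
    {μ : Measure (EuclideanSpace ℝ (Fin n) × EuclideanSpace ℝ (Fin m))}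
    (h : FeasibleD X U f α μ₀ μ μh) : μ₀ X ≤ volume (mciD X U f) := by
  obtain ⟨hμ₀, hμ, -, -, -, hsupp, hL, hsum⟩ := h
  rw [msupport_eq_support] at hsupp
  set A := μ.map Prod.fst
  set B := μ.map fun p => f p.1 p.2
  have hLA : ∀ v, Continuous v → ∫ x, v x ∂A = ∫ x, v x ∂μ₀ + α * ∫ x, v x ∂B := by
    intro v hv
    rw [integral_map measurable_fst.aemeasurable hv.aestronglyMeasurable,
      integral_map hf.measurable.aemeasurable hv.aestronglyMeasurable]
    exact hL v hv
  have hμ₀A : μ₀.support ⊆ A.support :=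
    support_subset_support_of_integral_pos fun v hv hv01 hpos => by
      rw [hLA v hv]
      exact add_pos_of_pos_of_nonneg hpos
        (mul_nonneg hα0.le (integral_nonneg fun x => (hv01 x).1))
  have hBA : B.support ⊆ A.support :=
    support_subset_support_of_integral_pos fun v hv hv01 hpos => by
      rw [hLA v hv]
      exact add_pos_of_nonneg_of_pos (integral_nonneg fun x => (hv01 x).1) (mul_pos hα0 hpos)
  have hA : A.support ⊆ mciD X U f := by
    have hcpt : IsCompact μ.support :=
      (hX.prod hU).of_isClosed_subset Measure.isClosed_support hsupp
    refine subset_mciD (fun x hx => ?_) fun x hx => ?_ <;>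
      obtain ⟨p, hp, rfl⟩ := support_map_subset_image continuous_fst hcpt hx
    · exact (hsupp hp).1
    · exact ⟨p.2, (hsupp hp).2, hBA (image_support_subset_support_map hf μ ⟨p, hp, rfl⟩)⟩
  have hμ₀_le : μ₀ ≤ volume := calc
    μ₀ ≤ μ₀ + μh := Measure.le_add_right le_rfl
    _ = volume.restrict X := hsum
    _ ≤ volume := Measure.restrict_le_self
  calc μ₀ X ≤ μ₀ (mciD X U f) := measure_mono_ae <|
        Filter.mem_of_superset Measure.support_mem_ae fun x hx _ => hA (hμ₀A hx)
    _ ≤ volume (mciD X U f) := Measure.le_iff'.1 hμ₀_le _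

end Primal

theorem discrete_primal_value_eq_volume_MCI {n m : ℕ}
    (X : Set (EuclideanSpace ℝ (Fin n))) (U : Set (EuclideanSpace ℝ (Fin m)))
    (hX : IsCompact X) (hU : IsCompact U)
    (f : EuclideanSpace ℝ (Fin n) → EuclideanSpace ℝ (Fin m) → EuclideanSpace ℝ (Fin n))
    (hf : Continuous fun p : EuclideanSpace ℝ (Fin n) × EuclideanSpace ℝ (Fin m) => f p.1 p.2)
    (α : ℝ) (hα0 : 0 < α) (hα1 : α < 1) :
    sSup {r : ℝ≥0∞ | ∃ μ₀ μ μh, FeasibleD X U f α μ₀ μ μh ∧ r = μ₀ X}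
      = volume (mciD X U f) ∧
    ∃ μ μh, FeasibleD X U f α (volume.restrict (mciD X U f)) μ μh := by
  obtain ⟨μ, μh, hfeas⟩ := exists_feasibleD_restrict_mciD hX hU hf hα0 hα1
  refine ⟨le_antisymm (sSup_le ?_) (le_sSup ⟨_, μ, μh, hfeas, ?_⟩), μ, μh, hfeas⟩
  · rintro r ⟨μ₀, μ', μh', hF, rfl⟩
    exact hF.measure_le_volume_mciD hX hU hf hα0
  · rw [Measure.restrict_apply' (isCompact_mciD hX hU hf).measurableSet,
      inter_eq_self_of_subset_right mciD_subset]
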